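/- Let A ∈ ℝ^{n×d} have full column rank, and let S ∈ ℝ^{m×n} be a (1±ε)-subspace embedding for the column space of A with ε ∈ (0,1). Let SA = QR be a QR decomposition with R invertible. Then every singular value σ of AR⁻¹ satisfies 1/(1+ε) ≤ σ ≤ 1/(1-ε); in particular the condition number κ(AR⁻¹) ≤ (1+ε)/(1-ε). -/
import Mathlib


open Matrix Finset MeasureTheory
open scoped Classical

noncomputable def l2 {n : ℕ} (x : Fin n → ℝ) : ℝ := Real.sqrt (∑ i, x i ^ 2)

noncomputable def opNorm {m n : ℕ} (M : Matrix (Fin m) (Fin n) ℝ) : ℝ :=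
  sSup ((fun x => l2 (M.mulVec x)) '' {x | l2 x = 1})

noncomputable def sigmaMin {m n : ℕ} (M : Matrix (Fin m) (Fin n) ℝ) : ℝ :=
  sInf ((fun x => l2 (M.mulVec x)) '' {x | l2 x = 1})

lemma l2_Q_mulVec {m d : ℕ} (Q : Matrix (Fin m) (Fin d) ℝ) (hQ : Qᵀ * Q = 1)
    (y : Fin d → ℝ) : l2 (Q.mulVec y) = l2 y := by
  unfold l2
  congr 1
  have h1 : ∑ i, Q.mulVec y i ^ 2 = (Q.mulVec y) ⬝ᵥ (Q.mulVec y) := by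
    simp [dotProduct, sq]
  have h2 : (Q.mulVec y) ⬝ᵥ (Q.mulVec y) = (Qᵀ.mulVec (Q.mulVec y)) ⬝ᵥ y := by
    rw [Matrix.mulVec_transpose, ← Matrix.dotProduct_mulVec]
  rw [h1, h2, Matrix.mulVec_mulVec, hQ, Matrix.one_mulVec]
  simp [dotProduct, sq]

theorem stmt12 {n d m : ℕ} (A : Matrix (Fin n) (Fin d) ℝ) (hrank : A.rank = d)
    (ε : ℝ) (hε : ε ∈ Set.Ioo (0:ℝ) 1)
    (S : Matrix (Fin m) (Fin n) ℝ)
    (hSE : ∀ x : Fin d → ℝ, (1-ε) * l2 (A.mulVec x) ≤ l2 ((S*A).mulVec x) ∧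
        l2 ((S*A).mulVec x) ≤ (1+ε) * l2 (A.mulVec x))
    (Q : Matrix (Fin m) (Fin d) ℝ) (R : Matrix (Fin d) (Fin d) ℝ)
    (hQR : S * A = Q * R) (hQ : Qᵀ * Q = 1) (hR : IsUnit R) :
    (∀ x : Fin d → ℝ, l2 x = 1 →
      1/(1+ε) ≤ l2 ((A * R⁻¹).mulVec x) ∧ l2 ((A * R⁻¹).mulVec x) ≤ 1/(1-ε)) ∧
    opNorm (A * R⁻¹) / sigmaMin (A * R⁻¹) ≤ (1+ε)/(1-ε) := by
  obtain ⟨hε0, hε1⟩ := hε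
  have h1ε : (0:ℝ) < 1 - ε := by linarith
  have h1ε' : (0:ℝ) < 1 + ε := by linarith
  have hRR : R * R⁻¹ = 1 := Matrix.mul_nonsing_inv R ((Matrix.isUnit_iff_isUnit_det R).mp hR)
  have key : ∀ x : Fin d → ℝ, l2 x = 1 →
      1/(1+ε) ≤ l2 ((A * R⁻¹).mulVec x) ∧ l2 ((A * R⁻¹).mulVec x) ≤ 1/(1-ε) := by
    intro x hx
    set y := R⁻¹.mulVec x with hy
    have hAy : (A * R⁻¹).mulVec x = A.mulVec y := by
      rw [← Matrix.mulVec_mulVec]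
    have hSAy : l2 ((S*A).mulVec y) = 1 := by
      rw [hQR, hy, Matrix.mulVec_mulVec, Matrix.mul_assoc, hRR, Matrix.mul_one,
        l2_Q_mulVec Q hQ, hx]
    obtain ⟨hl, hr⟩ := hSE y
    rw [hSAy] at hl hr
    rw [hAy]
    constructor
    · rw [div_le_iff₀ h1ε']
      linarith
    · rw [le_div_iff₀ h1ε]
      linarith
  refine ⟨key, ?_⟩
  unfold opNorm sigmaMin
  set T := ((fun x => l2 ((A * R⁻¹).mulVec x)) '' {x | l2 x = 1}) with hT
  rcases Nat.eq_zero_or_pos d with hd | hd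
  · have hempty : ({x : Fin d → ℝ | l2 x = 1}) = ∅ := by
      ext x
      subst hd
      simp [l2]
    rw [hT, hempty]
    simp only [Set.image_empty, Real.sSup_empty, Real.sInf_empty, div_zero]
    positivity
  · have hne : T.Nonempty := by
      set e : Fin d → ℝ := Pi.single ⟨0, hd⟩ 1 with he
      have hsum : (∑ i, e i ^ 2) = 1 := by
        simp [he, Pi.single_apply, sq, Finset.sum_ite_eq']
      exact ⟨l2 ((A * R⁻¹).mulVec e), ⟨e, by simp [Set.mem_setOf_eq, l2, hsum], rfl⟩⟩
    have hub : ∀ t ∈ T, t ≤ 1/(1-ε) := by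
      rintro t ⟨x, hx, rfl⟩
      exact (key x hx).2
    have hlb : ∀ t ∈ T, 1/(1+ε) ≤ t := by
      rintro t ⟨x, hx, rfl⟩
      exact (key x hx).1
    have hsup : sSup T ≤ 1/(1-ε) := Real.sSup_le hub (by positivity)
    have hinf : 1/(1+ε) ≤ sInf T := le_csInf hne hlb
    have hinfpos : (0:ℝ) < sInf T := lt_of_lt_of_le (by positivity) hinf
    calc sSup T / sInf T ≤ (1/(1-ε)) / (1/(1+ε)) :=
          div_le_div₀ (by positivity) hsup (by positivity) hinf
      _ = (1+ε)/(1-ε) := by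
          rw [div_div_div_comm, one_div_one]
          rw [one_div_div]
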